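/- arXiv:2207.10919 — 4 statements merged into one kernel-verified Lean document; each statement's English description precedes it below -/
import Mathlib

section
/- Let p ≥ 5 be a prime. If G is a subgroup of GL(2,p) with index strictly less than p, then G contains SL(2,p). -/
open Matrix

section Aux

variable {p : ℕ} [Fact p.Prime]

private def E12 (t : ZMod p) : Matrix.SpecialLinearGroup (Fin 2) (ZMod p) :=
  ⟨!![1, t; 0, 1], by simp [Matrix.det_fin_two]⟩

private def E21 (t : ZMod p) : Matrix.SpecialLinearGroup (Fin 2) (ZMod p) :=
  ⟨!![1, 0; t, 1], by simp [Matrix.det_fin_two]⟩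

private lemma pow_E12 (t : ZMod p) (n : ℕ) :
    (!![1, t; 0, 1] : Matrix (Fin 2) (Fin 2) (ZMod p)) ^ n = !![1, n • t; 0, 1] := by
  induction n with
  | zero => ext i j; fin_cases i <;> fin_cases j <;> simp
  | succ n ih =>
      rw [pow_succ, ih]; ext i j
      fin_cases i <;> fin_cases j <;>
        simp [Matrix.mul_apply, Fin.sum_univ_two, add_smul] <;> ring

private lemma pow_E21 (t : ZMod p) (n : ℕ) :
    (!![1, 0; t, 1] : Matrix (Fin 2) (Fin 2) (ZMod p)) ^ n = !![1, 0; n • t, 1] := by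
  induction n with
  | zero => ext i j; fin_cases i <;> fin_cases j <;> simp
  | succ n ih =>
      rw [pow_succ, ih]; ext i j
      fin_cases i <;> fin_cases j <;>
        simp [Matrix.mul_apply, Fin.sum_univ_two, add_smul] <;> ring

private lemma E12_pow_p (t : ZMod p) : (E12 t) ^ p = 1 := by
  apply Subtype.ext
  rw [Matrix.SpecialLinearGroup.coe_pow]
  show (!![1, t; 0, 1] : Matrix (Fin 2) (Fin 2) (ZMod p)) ^ p = 1
  rw [pow_E12]
  have : (p • t : ZMod p) = 0 := by
    rw [nsmul_eq_mul, ZMod.natCast_self, zero_mul]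
  rw [this]
  ext i j; fin_cases i <;> fin_cases j <;> simp

private lemma E21_pow_p (t : ZMod p) : (E21 t) ^ p = 1 := by
  apply Subtype.ext
  rw [Matrix.SpecialLinearGroup.coe_pow]
  show (!![1, 0; t, 1] : Matrix (Fin 2) (Fin 2) (ZMod p)) ^ p = 1
  rw [pow_E21]
  have : (p • t : ZMod p) = 0 := by
    rw [nsmul_eq_mul, ZMod.natCast_self, zero_mul]
  rw [this]
  ext i j; fin_cases i <;> fin_cases j <;> simp

private lemma decomp_of_ne_zero (g : Matrix.SpecialLinearGroup (Fin 2) (ZMod p))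
    (hc : (g : Matrix (Fin 2) (Fin 2) (ZMod p)) 1 0 ≠ 0) :
    g = E12 (((g : Matrix (Fin 2) (Fin 2) (ZMod p)) 0 0 - 1) * ((g : Matrix (Fin 2) (Fin 2) (ZMod p)) 1 0)⁻¹) *
        E21 ((g : Matrix (Fin 2) (Fin 2) (ZMod p)) 1 0) *
        E12 (((g : Matrix (Fin 2) (Fin 2) (ZMod p)) 1 1 - 1) * ((g : Matrix (Fin 2) (Fin 2) (ZMod p)) 1 0)⁻¹) := by
  set a := (g : Matrix (Fin 2) (Fin 2) (ZMod p)) 0 0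
  set b := (g : Matrix (Fin 2) (Fin 2) (ZMod p)) 0 1
  set c := (g : Matrix (Fin 2) (Fin 2) (ZMod p)) 1 0
  set d := (g : Matrix (Fin 2) (Fin 2) (ZMod p)) 1 1
  have hdet : a * d - b * c = 1 := by
    have := g.2
    rwa [Matrix.det_fin_two] at this
  apply Matrix.SpecialLinearGroup.ext
  intro i j
  rw [Matrix.SpecialLinearGroup.coe_mul, Matrix.SpecialLinearGroup.coe_mul]
  fin_cases i <;> fin_cases j <;>
    simp [E12, E21, Matrix.SpecialLinearGroup.coe_mul, Matrix.mul_apply, Fin.sum_univ_two] <;>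
    (try field_simp) <;> first
      | linear_combination hdet
      | linear_combination (-2 : ZMod p) * hdet
      | linear_combination -hdet
      | ring

end Aux

/-- Let `p ≥ 5` be a prime. If `G` is a subgroup of `GL(2,p)` with index strictly
less than `p`, then `G` contains `SL(2,p)`. -/
theorem stmt_0 (p : ℕ) (hp : p.Prime) (hp5 : 5 ≤ p)
    (G : Subgroup (Matrix.GeneralLinearGroup (Fin 2) (ZMod p)))
    (hG : G.index < p) :
    (Matrix.SpecialLinearGroup.toGL :
      Matrix.SpecialLinearGroup (Fin 2) (ZMod p) →* Matrix.GeneralLinearGroup (Fin 2) (ZMod p)).range ≤ G := by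
  haveI := Fact.mk hp
  set K := G.normalCore with hK
  haveI : K.Normal := Subgroup.normalCore_normal G
  -- index of K is not divisible by p
  have hdvd : K.index ∣ Nat.factorial G.index := by
    rw [hK, Subgroup.normalCore_eq_ker, Subgroup.index_ker]
    have h1 : Nat.card (MulAction.toPermHom (Matrix.GeneralLinearGroup (Fin 2) (ZMod p)) (Matrix.GeneralLinearGroup (Fin 2) (ZMod p) ⧸ G)).range ∣
        Nat.card (Equiv.Perm (Matrix.GeneralLinearGroup (Fin 2) (ZMod p) ⧸ G)) := Subgroup.card_subgroup_dvd_card _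
    have h2 : Nat.card (Equiv.Perm (Matrix.GeneralLinearGroup (Fin 2) (ZMod p) ⧸ G)) = Nat.factorial G.index := by
      classical
      haveI : Fintype (Matrix.GeneralLinearGroup (Fin 2) (ZMod p) ⧸ G) := Fintype.ofFinite _
      rw [Nat.card_eq_fintype_card, Fintype.card_perm, ← Nat.card_eq_fintype_card,
        ← Subgroup.index_eq_card]
    rwa [h2] at h1
  have hpK : ¬ p ∣ K.index := by
    intro h
    have := hp.dvd_factorial.mp (h.trans hdvd)
    omega
  -- every element of order dividing p is in K
  have key : ∀ x : Matrix.GeneralLinearGroup (Fin 2) (ZMod p), x ^ p = 1 → x ∈ K := by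
    intro x hx
    rw [← QuotientGroup.eq_one_iff]
    have hy : ((x : Matrix.GeneralLinearGroup (Fin 2) (ZMod p) ⧸ K)) ^ p = 1 := by
      rw [← QuotientGroup.mk_pow, hx, QuotientGroup.mk_one]
    have h1 : orderOf (x : Matrix.GeneralLinearGroup (Fin 2) (ZMod p) ⧸ K) ∣ p := orderOf_dvd_of_pow_eq_one hy
    have h2 : orderOf (x : Matrix.GeneralLinearGroup (Fin 2) (ZMod p) ⧸ K) ∣ K.index := by
      rw [Subgroup.index_eq_card]; exact orderOf_dvd_natCard _
    rcases (Nat.Prime.eq_one_or_self_of_dvd hp _ h1) with h | h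
    · exact orderOf_eq_one_iff.mp h
    · rw [h] at h2; exact absurd h2 hpK
  -- elementary matrices are in K
  have hE12 : ∀ t : ZMod p, Matrix.SpecialLinearGroup.toGL (E12 t) ∈ K := by
    intro t
    exact key _ (by rw [← map_pow, E12_pow_p, _root_.map_one])
  have hE21 : ∀ t : ZMod p, Matrix.SpecialLinearGroup.toGL (E21 t) ∈ K := by
    intro t
    exact key _ (by rw [← map_pow, E21_pow_p, _root_.map_one])
  -- every SL element with nonzero lower-left entry maps into K
  have main : ∀ g : Matrix.SpecialLinearGroup (Fin 2) (ZMod p),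
      Matrix.SpecialLinearGroup.toGL g ∈ K := by
    have aux : ∀ g : Matrix.SpecialLinearGroup (Fin 2) (ZMod p),
        (g : Matrix (Fin 2) (Fin 2) (ZMod p)) 1 0 ≠ 0 →
        Matrix.SpecialLinearGroup.toGL g ∈ K := by
      intro g hc
      rw [decomp_of_ne_zero g hc, _root_.map_mul, _root_.map_mul]
      exact K.mul_mem (K.mul_mem (hE12 _) (hE21 _)) (hE12 _)
    intro g
    by_cases hc : (g : Matrix (Fin 2) (Fin 2) (ZMod p)) 1 0 ≠ 0
    · exact aux g hc
    · push_neg at hc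
      have hdet : (g : Matrix (Fin 2) (Fin 2) (ZMod p)) 0 0 *
          (g : Matrix (Fin 2) (Fin 2) (ZMod p)) 1 1 = 1 := by
        have h := g.2
        rw [Matrix.det_fin_two, hc] at h
        linear_combination h
      have hd : (g : Matrix (Fin 2) (Fin 2) (ZMod p)) 1 1 ≠ 0 := by
        intro h0
        rw [h0, mul_zero] at hdet
        exact zero_ne_one hdet
      have h1 : Matrix.SpecialLinearGroup.toGL (g * E21 1) ∈ K := by
        apply aux
        have : ((g * E21 1 : Matrix.SpecialLinearGroup (Fin 2) (ZMod p)) :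
            Matrix (Fin 2) (Fin 2) (ZMod p)) 1 0 =
            (g : Matrix (Fin 2) (Fin 2) (ZMod p)) 1 1 := by
          rw [Matrix.SpecialLinearGroup.coe_mul]
          simp [E21, Matrix.SpecialLinearGroup.coe_mul, Matrix.mul_apply,
            Fin.sum_univ_two, hc]
        rw [this]; exact hd
      have h2 : Matrix.SpecialLinearGroup.toGL g =
          Matrix.SpecialLinearGroup.toGL (g * E21 1) *
            (Matrix.SpecialLinearGroup.toGL (E21 1))⁻¹ := by
        rw [_root_.map_mul]; group
      rw [h2]
      exact K.mul_mem h1 (K.inv_mem (hE21 1))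
  rintro x ⟨g, rfl⟩
  exact G.normalCore_le (main g)
end

section
/- Let p be an odd prime and E the extraspecial group of order p³ and exponent p with generators a, b and c = [a,b] central. Then the set ⟨b⟩* ∪ ⋃_{i∈ℤ/p} ⟨b^i a b^i⟩* equals the set ⟨a⟩* ∪ ⋃_{i∈ℤ/p} ⟨a^i b a^i⟩*, where H* = H \ {1}. -/
section
variable {G : Type*} [Group G] (x y z : G)

lemma l1_aux (hz : ∀ g : G, z * g = g * z) (h : y * x = x * y * z) :
    ∀ n : ℕ, y ^ n * x = x * y ^ n * z ^ n := by
  intro n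
  induction n with
  | zero => simp
  | succ n ih =>
    have hzy : z * y ^ n = y ^ n * z := hz (y ^ n)
    calc y ^ (n + 1) * x = y * (y ^ n * x) := by rw [pow_succ', mul_assoc]
      _ = y * (x * y ^ n * z ^ n) := by rw [ih]
      _ = (y * x) * y ^ n * z ^ n := by simp only [mul_assoc]
      _ = x * y * (z * y ^ n) * z ^ n := by rw [h]; simp only [mul_assoc]
      _ = x * y * (y ^ n * z) * z ^ n := by rw [hzy]
      _ = x * (y * y ^ n) * (z * z ^ n) := by simp only [mul_assoc]
      _ = x * y ^ (n + 1) * z ^ (n + 1) := by rw [← pow_succ', ← pow_succ']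

lemma comm_aux (hz : ∀ g : G, z * g = g * z) (h : y * x = x * y * z) :
    ∀ n m : ℕ, y ^ n * x ^ m = x ^ m * y ^ n * z ^ (n * m) := by
  have hznn : ∀ (t : ℕ) (g : G), z ^ t * g = g * z ^ t := by
    intro t g
    exact ((show Commute z g from hz g).pow_left t).eq
  intro n m
  induction m with
  | zero => simp
  | succ m ih =>
    calc y ^ n * x ^ (m + 1) = (y ^ n * x ^ m) * x := by rw [pow_succ, mul_assoc]
      _ = x ^ m * y ^ n * z ^ (n * m) * x := by rw [ih]
      _ = x ^ m * (y ^ n * (z ^ (n * m) * x)) := by simp only [mul_assoc]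
      _ = x ^ m * (y ^ n * (x * z ^ (n * m))) := by rw [hznn (n * m) x]
      _ = x ^ m * (y ^ n * x) * z ^ (n * m) := by simp only [mul_assoc]
      _ = x ^ m * (x * y ^ n * z ^ n) * z ^ (n * m) := by rw [l1_aux x y z hz h n]
      _ = (x ^ m * x) * y ^ n * (z ^ n * z ^ (n * m)) := by simp only [mul_assoc]
      _ = x ^ (m + 1) * y ^ n * z ^ (n + n * m) := by rw [← pow_succ, ← pow_add]
      _ = x ^ (m + 1) * y ^ n * z ^ (n * (m + 1)) := by ring_nf

lemma mul_nf (hz : ∀ g : G, z * g = g * z) (h : y * x = x * y * z)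
    (α β γ α' β' γ' : ℕ) :
    (x ^ α * y ^ β * z ^ γ) * (x ^ α' * y ^ β' * z ^ γ') =
      x ^ (α + α') * y ^ (β + β') * z ^ ((γ + γ') + β * α') := by
  have hznn : ∀ (t : ℕ) (g : G), z ^ t * g = g * z ^ t := by
    intro t g
    exact (((show Commute z g from hz g)).pow_left t).eq
  calc (x ^ α * y ^ β * z ^ γ) * (x ^ α' * y ^ β' * z ^ γ')
      = x ^ α * (y ^ β * (z ^ γ * (x ^ α' * (y ^ β' * z ^ γ')))) := by simp only [mul_assoc]
    _ = x ^ α * (y ^ β * (x ^ α' * (y ^ β' * z ^ γ') * z ^ γ)) := by rw [hznn γ]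
    _ = x ^ α * ((y ^ β * x ^ α') * (y ^ β' * (z ^ γ' * z ^ γ))) := by simp only [mul_assoc]
    _ = x ^ α * ((x ^ α' * y ^ β * z ^ (β * α')) * (y ^ β' * (z ^ γ' * z ^ γ))) := by
        rw [comm_aux x y z hz h β α']
    _ = x ^ α * (x ^ α' * (y ^ β * (z ^ (β * α') * y ^ β') * (z ^ γ' * z ^ γ))) := by
        simp only [mul_assoc]
    _ = x ^ α * (x ^ α' * (y ^ β * (y ^ β' * z ^ (β * α')) * (z ^ γ' * z ^ γ))) := by
        rw [hznn (β * α')]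
    _ = (x ^ α * x ^ α') * ((y ^ β * y ^ β') * (z ^ (β * α') * (z ^ γ' * z ^ γ))) := by
        simp only [mul_assoc]
    _ = x ^ (α + α') * y ^ (β + β') * z ^ (β * α' + (γ' + γ)) := by
        rw [← pow_add, ← pow_add, ← pow_add, ← pow_add, mul_assoc]
    _ = x ^ (α + α') * y ^ (β + β') * z ^ ((γ + γ') + β * α') := by ring_nf

lemma gen_nf (hz : ∀ g : G, z * g = g * z) (h : y * x = x * y * z) (m : ℕ) :
    y ^ m * x * y ^ m = x ^ 1 * y ^ (2 * m) * z ^ m := by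
  calc y ^ m * x * y ^ m = (x * y ^ m * z ^ m) * y ^ m := by rw [l1_aux x y z hz h m]
    _ = x * (y ^ m * (z ^ m * y ^ m)) := by simp only [mul_assoc]
    _ = x * (y ^ m * (y ^ m * z ^ m)) := by
        rw [(((show Commute z (y ^ m) from hz _)).pow_left m).eq]
    _ = x ^ 1 * (y ^ m * y ^ m) * z ^ m := by simp only [mul_assoc, pow_one]
    _ = x ^ 1 * y ^ (2 * m) * z ^ m := by rw [← pow_add, two_mul]

lemma pow_aux (hz : ∀ g : G, z * g = g * z) (h : y * x = x * y * z) (m : ℕ) :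
    ∀ k : ℕ, (y ^ m * x * y ^ m) ^ k = x ^ k * y ^ (2 * m * k) * z ^ (m * k ^ 2) := by
  intro k
  induction k with
  | zero => simp
  | succ k ih =>
    rw [pow_succ, ih, gen_nf x y z hz h m, mul_nf x y z hz h]
    have e1 : 2 * m * k + 2 * m = 2 * m * (k + 1) := by ring
    have e2 : m * k ^ 2 + m + 2 * m * k * 1 = m * (k + 1) ^ 2 := by ring
    rw [e1, e2]
end

lemma powcong (p : ℕ) [NeZero p] {G : Type*} [Group G] (g : G) (hg : g ^ p = 1)
    {m n : ℕ} (hmn : (m : ZMod p) = (n : ZMod p)) : g ^ m = g ^ n := by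
  have hd : orderOf g ∣ p := orderOf_dvd_of_pow_eq_one hg
  exact pow_eq_pow_iff_modEq.2 (((ZMod.natCast_eq_natCast_iff m n p).1 hmn).of_dvd hd)

lemma key_id (p : ℕ) (hp : p.Prime) (hp2 : p ≠ 2) {G : Type*} [Group G] (x y z : G)
    (hz : ∀ g : G, z * g = g * z) (h : y * x = x * y * z)
    (hx : x ^ p = 1) (hy : y ^ p = 1) (hz1 : z ^ p = 1)
    (i : ZMod p) (hi : i ≠ 0) :
    x ^ ((4 * i)⁻¹).val * y * x ^ ((4 * i)⁻¹).val
      = (y ^ i.val * x * y ^ i.val) ^ ((2 * i)⁻¹).val := by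
  haveI := Fact.mk hp
  haveI : NeZero p := ⟨hp.ne_zero⟩
  have h2 : (2 : ZMod p) ≠ 0 := by
    have h2' : ((2 : ℕ) : ZMod p) ≠ 0 := by
      rw [Ne, ZMod.natCast_eq_zero_iff]
      intro hdvd
      exact hp2 ((Nat.prime_dvd_prime_iff_eq hp Nat.prime_two).1 hdvd)
    simpa using h2'
  have h4 : (4 : ZMod p) ≠ 0 := by
    have e : (4 : ZMod p) = 2 * 2 := by norm_num
    rw [e]; exact mul_ne_zero h2 h2
  have h2i : (2 * i : ZMod p) ≠ 0 := mul_ne_zero h2 hi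
  have h4i : (4 * i : ZMod p) ≠ 0 := mul_ne_zero h4 hi
  have hcastv : ∀ t : ZMod p, ((t.val : ℕ) : ZMod p) = t := by
    intro t; simp [ZMod.natCast_val, ZMod.cast_id]
  have hL : x ^ ((4 * i)⁻¹).val * y * x ^ ((4 * i)⁻¹).val
      = x ^ (((4 * i)⁻¹).val + ((4 * i)⁻¹).val) * y ^ (1 + 0)
        * z ^ ((0 + 0) + 1 * ((4 * i)⁻¹).val) := by
    calc x ^ ((4 * i)⁻¹).val * y * x ^ ((4 * i)⁻¹).val
        = (x ^ ((4 * i)⁻¹).val * y ^ 1 * z ^ 0)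
            * (x ^ ((4 * i)⁻¹).val * y ^ 0 * z ^ 0) := by simp
      _ = _ := mul_nf x y z hz h ((4 * i)⁻¹).val 1 0 ((4 * i)⁻¹).val 0 0
  rw [hL, pow_aux x y z hz h i.val ((2 * i)⁻¹).val]
  have c1 : ((((4 * i)⁻¹).val + ((4 * i)⁻¹).val : ℕ) : ZMod p)
      = ((((2 * i)⁻¹).val : ℕ) : ZMod p) := by
    push_cast [hcastv]
    have e : ((4 * i)⁻¹ + (4 * i)⁻¹) * (2 * i) = (4 * i)⁻¹ * (4 * i) := by ring
    exact eq_inv_of_mul_eq_one_left (by rw [e, inv_mul_cancel₀ h4i])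
  have c2 : (((1 + 0 : ℕ)) : ZMod p)
      = ((2 * i.val * ((2 * i)⁻¹).val : ℕ) : ZMod p) := by
    push_cast [hcastv]
    exact (mul_inv_cancel₀ h2i).symm
  have c3 : (((0 + 0) + 1 * ((4 * i)⁻¹).val : ℕ) : ZMod p)
      = ((i.val * ((2 * i)⁻¹).val ^ 2 : ℕ) : ZMod p) := by
    push_cast [hcastv]
    rw [zero_add, one_mul]
    have h4i2 : (4 * i ^ 2 : ZMod p) ≠ 0 := by
      have e : (4 * i ^ 2 : ZMod p) = (4 * i) * i := by ring
      rw [e]; exact mul_ne_zero h4i hi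
    have e : (i * ((2 * i)⁻¹) ^ 2) * (4 * i) = 1 := by
      rw [inv_pow]
      have e2 : ((2 : ZMod p) * i) ^ 2 = 4 * i ^ 2 := by ring
      rw [e2]
      have e3 : (i * (4 * i ^ 2 : ZMod p)⁻¹) * (4 * i) = (4 * i ^ 2)⁻¹ * (4 * i ^ 2) := by
        ring
      rw [e3, inv_mul_cancel₀ h4i2]
    exact (eq_inv_of_mul_eq_one_left e).symm
  rw [powcong p x hx c1, powcong p y hy c2, powcong p z hz1 c3]

lemma key_sub (p : ℕ) (hp : p.Prime) (hp2 : p ≠ 2) {G : Type*} [Group G] (x y z : G)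
    (hz : ∀ g : G, z * g = g * z) (h : y * x = x * y * z)
    (hx : x ^ p = 1) (hy : y ^ p = 1) (hz1 : z ^ p = 1)
    (i : ZMod p) (hi : i ≠ 0) :
    Subgroup.zpowers (y ^ i.val * x * y ^ i.val)
      = Subgroup.zpowers (x ^ ((4 * i)⁻¹).val * y * x ^ ((4 * i)⁻¹).val) := by
  haveI := Fact.mk hp
  haveI : NeZero p := ⟨hp.ne_zero⟩
  have h2 : (2 : ZMod p) ≠ 0 := by
    have h2' : ((2 : ℕ) : ZMod p) ≠ 0 := by
      rw [Ne, ZMod.natCast_eq_zero_iff]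
      intro hdvd
      exact hp2 ((Nat.prime_dvd_prime_iff_eq hp Nat.prime_two).1 hdvd)
    simpa using h2'
  have h4 : (4 : ZMod p) ≠ 0 := by
    have e : (4 : ZMod p) = 2 * 2 := by norm_num
    rw [e]; exact mul_ne_zero h2 h2
  have h4i : (4 * i : ZMod p) ≠ 0 := mul_ne_zero h4 hi
  have hj : ((4 * i)⁻¹ : ZMod p) ≠ 0 := inv_ne_zero h4i
  have hswap : x * y = y * x * z⁻¹ := by
    rw [h]; simp [mul_assoc]
  have hzinv : ∀ g : G, z⁻¹ * g = g * z⁻¹ := fun g =>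
    ((show Commute z g from hz g).inv_left).eq
  have hzinv1 : (z⁻¹) ^ p = 1 := by rw [inv_pow, hz1, inv_one]
  have hidx : ((4 * (4 * i)⁻¹ : ZMod p))⁻¹ = i := by
    rw [mul_inv, inv_inv, ← mul_assoc, inv_mul_cancel₀ h4, one_mul]
  apply le_antisymm
  · rw [Subgroup.zpowers_le]
    have hk := key_id p hp hp2 y x z⁻¹ hzinv hswap hy hx hzinv1 ((4 * i)⁻¹) hj
    rw [hidx] at hk
    rw [hk]
    exact pow_mem (Subgroup.mem_zpowers _) _
  · rw [Subgroup.zpowers_le]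
    rw [key_id p hp hp2 x y z hz h hx hy hz1 i hi]
    exact pow_mem (Subgroup.mem_zpowers _) _


/-- Let `p` be an odd prime and `E` the extraspecial group of order `p³` and
exponent `p`, generated by `a, b` with `c = [a,b]` central and nontrivial. Then
`⟨b⟩* ∪ ⋃_{i∈ℤ/p} ⟨bⁱabⁱ⟩* = ⟨a⟩* ∪ ⋃_{i∈ℤ/p} ⟨aⁱbaⁱ⟩*` where `H* = H \ {1}`. -/
theorem stmt_12 (p : ℕ) (hp : p.Prime) (hodd : Odd p)
    {E : Type*} [Group E] [Fintype E] (a b c : E)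
    (hcard : Fintype.card E = p ^ 3)
    (hexp : ∀ g : E, g ^ p = 1)
    (hgen : Subgroup.closure {a, b} = ⊤)
    (hc : c = a⁻¹ * b⁻¹ * a * b)
    (hcent : c ∈ Subgroup.center E)
    (hc1 : c ≠ 1) :
    (((Subgroup.zpowers b : Set E) \ {1}) ∪
      ⋃ i : ZMod p, ((Subgroup.zpowers (b ^ i.val * a * b ^ i.val) : Set E) \ {1}))
    = (((Subgroup.zpowers a : Set E) \ {1}) ∪
      ⋃ i : ZMod p, ((Subgroup.zpowers (a ^ i.val * b * a ^ i.val) : Set E) \ {1})) := by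
  haveI := Fact.mk hp
  haveI : NeZero p := ⟨hp.ne_zero⟩
  have hp2 : p ≠ 2 := by
    obtain ⟨t, ht⟩ := hodd; omega
  have hcz : ∀ g : E, c * g = g * c := fun g =>
    (Subgroup.mem_center_iff.1 hcent g).symm
  have hczinv : ∀ g : E, c⁻¹ * g = g * c⁻¹ := fun g =>
    ((show Commute c g from hcz g).inv_left).eq
  have hba : b * a = a * b * c⁻¹ := by rw [hc]; group
  have hab : a * b = b * a * c := by rw [hc]; group
  have hcip : (c⁻¹) ^ p = 1 := by rw [inv_pow, hexp c, inv_one]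
  have key1 : ∀ i : ZMod p, i ≠ 0 →
      Subgroup.zpowers (b ^ i.val * a * b ^ i.val)
        = Subgroup.zpowers (a ^ ((4 * i)⁻¹).val * b * a ^ ((4 * i)⁻¹).val) :=
    fun i hi => key_sub p hp hp2 a b c⁻¹ hczinv hba (hexp a) (hexp b) hcip i hi
  have key2 : ∀ i : ZMod p, i ≠ 0 →
      Subgroup.zpowers (a ^ i.val * b * a ^ i.val)
        = Subgroup.zpowers (b ^ ((4 * i)⁻¹).val * a * b ^ ((4 * i)⁻¹).val) :=
    fun i hi => key_sub p hp hp2 b a c hcz hab (hexp b) (hexp a) (hexp c) i hi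
  have h0 : ((0 : ZMod p)).val = 0 := ZMod.val_zero
  ext g
  simp only [Set.mem_union, Set.mem_iUnion, Set.mem_diff, Set.mem_singleton_iff,
    SetLike.mem_coe]
  constructor
  · rintro (⟨hg, hg1⟩ | ⟨i, hgi, hg1⟩)
    · exact Or.inr ⟨0, by simpa [h0] using hg, hg1⟩
    · by_cases hi : i = 0
      · subst hi
        rw [h0] at hgi
        simp only [pow_zero, one_mul, mul_one] at hgi
        exact Or.inl ⟨hgi, hg1⟩
      · exact Or.inr ⟨(4 * i)⁻¹, by rw [← key1 i hi]; exact hgi, hg1⟩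
  · rintro (⟨hg, hg1⟩ | ⟨i, hgi, hg1⟩)
    · exact Or.inr ⟨0, by simpa [h0] using hg, hg1⟩
    · by_cases hi : i = 0
      · subst hi
        rw [h0] at hgi
        simp only [pow_zero, one_mul, mul_one] at hgi
        exact Or.inl ⟨hgi, hg1⟩
      · exact Or.inr ⟨(4 * i)⁻¹, by rw [← key2 i hi]; exact hgi, hg1⟩
end

section
/- Let p be an odd prime and E the extraspecial group of order p³ and exponent p. Then |Aut(E)| = p³(p²−1)(p−1), i.e., Aut(E) has the same order as AGL(2,p) = (ℤ/p)² ⋊ GL(2,p). -/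
set_option maxHeartbeats 1000000
set_option linter.unusedVariables false
set_option linter.unusedSectionVars false

section aux
variable {E : Type*} [Group E]

lemma aux_pow_mod {p : ℕ} (x : E) (hx : x ^ p = 1) (n : ℕ) : x ^ n = x ^ (n % p) := by
  conv_lhs => rw [← Nat.div_add_mod n p]
  rw [pow_add, pow_mul, hx, one_pow, one_mul]

lemma aux_yx {x y d : E} (hxy : x * y = y * x * d) (hdx : Commute d x) (hdy : Commute d y)
    (M : ℕ) : y * x ^ M = x ^ M * y * (d ^ M)⁻¹ := by
  induction M with
  | zero => simp
  | succ M ih =>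
    have hyx : y * x = x * y * d⁻¹ := by rw [hxy]; group
    have h1 : Commute (d ^ M)⁻¹ x := (hdx.pow_left M).inv_left
    calc y * x ^ (M+1) = (y * x ^ M) * x := by rw [pow_succ, mul_assoc]
      _ = x ^ M * y * ((d ^ M)⁻¹ * x) := by rw [ih]; group
      _ = x ^ M * y * (x * (d ^ M)⁻¹) := by rw [h1.eq]
      _ = x ^ M * (y * x) * (d ^ M)⁻¹ := by group
      _ = x ^ M * (x * y * d⁻¹) * (d ^ M)⁻¹ := by rw [hyx]
      _ = x ^ (M+1) * y * (d ^ (M+1))⁻¹ := by rw [pow_succ, pow_succ]; group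

lemma aux_yxn {x y d : E} (hxy : x * y = y * x * d) (hdx : Commute d x) (hdy : Commute d y)
    (M N : ℕ) : y ^ N * x ^ M = x ^ M * y ^ N * (d ^ (M * N))⁻¹ := by
  induction N with
  | zero => simp
  | succ N ih =>
    have h2 : (d ^ M)⁻¹ * y ^ N = y ^ N * (d ^ M)⁻¹ := ((hdy.pow_right N).pow_left M).inv_left.eq
    calc y ^ (N+1) * x ^ M = y * (y ^ N * x ^ M) := by rw [pow_succ']; group
      _ = y * (x ^ M * y ^ N * (d ^ (M*N))⁻¹) := by rw [ih]
      _ = (y * x ^ M) * y ^ N * (d ^ (M*N))⁻¹ := by group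
      _ = x ^ M * y * ((d ^ M)⁻¹ * y ^ N) * (d ^ (M*N))⁻¹ := by rw [aux_yx hxy hdx hdy]; group
      _ = x ^ M * y * (y ^ N * (d ^ M)⁻¹) * (d ^ (M*N))⁻¹ := by rw [h2]
      _ = x ^ M * y ^ (N+1) * ((d ^ M)⁻¹ * (d ^ (M*N))⁻¹) := by rw [pow_succ']; group
      _ = x ^ M * y ^ (N+1) * (d ^ (M*(N+1)))⁻¹ := by
            rw [← mul_inv_rev, ← pow_add]; ring_nf

lemma aux_core {x y d : E} (hxy : x * y = y * x * d) (hdx : Commute d x) (hdy : Commute d y)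
    (I J K M N L : ℕ) :
    (x^I * y^J * d^K) * (x^M * y^N * d^L) = x^(I+M) * y^(J+N) * (d^(K+L) * (d^(M*J))⁻¹) := by
  have c1 : d ^ K * x ^ M = x ^ M * d ^ K := ((hdx.pow_right M).pow_left K).eq
  have c2 : d ^ K * y ^ N = y ^ N * d ^ K := ((hdy.pow_right N).pow_left K).eq
  have c3 : (d ^ (M*J))⁻¹ * y ^ N = y ^ N * (d ^ (M*J))⁻¹ := ((hdy.pow_right N).pow_left _).inv_left.eq
  calc (x^I * y^J * d^K) * (x^M * y^N * d^L)
      = x^I * y^J * (d^K * x^M) * (y^N * d^L) := by group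
    _ = x^I * y^J * (x^M * d^K) * (y^N * d^L) := by rw [c1]
    _ = x^I * ((y^J * x^M) * ((d^K * y^N) * d^L)) := by group
    _ = x^I * ((x^M * y^J * (d^(M*J))⁻¹) * ((y^N * d^K) * d^L)) := by
          rw [aux_yxn hxy hdx hdy, c2]
    _ = x^(I+M) * (y^J * ((d^(M*J))⁻¹ * y^N)) * (d^(K+L)) := by rw [pow_add, pow_add]; group
    _ = x^(I+M) * (y^J * (y^N * (d^(M*J))⁻¹)) * (d^(K+L)) := by rw [c3]
    _ = x^(I+M) * y^(J+N) * (d^(K+L) * (d^(M*J))⁻¹) := by rw [pow_add]; group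


variable {p : ℕ} [NeZero p]

lemma valpow_add {x : E} (hx : x ^ p = 1) (i j : ZMod p) :
    x ^ (i + j).val = x ^ i.val * x ^ j.val := by
  rw [ZMod.val_add, ← aux_pow_mod x hx, pow_add]

lemma valpow_mul {x : E} (hx : x ^ p = 1) (i j : ZMod p) :
    x ^ (i * j).val = x ^ (i.val * j.val) := by
  rw [ZMod.val_mul, ← aux_pow_mod x hx]

lemma valpow_neg {x : E} (hx : x ^ p = 1) (i : ZMod p) :
    x ^ (-i).val = (x ^ i.val)⁻¹ := by
  have h : x ^ (-i).val * x ^ i.val = 1 := by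
    rw [← valpow_add hx, neg_add_cancel, ZMod.val_zero, pow_zero]
  exact eq_inv_of_mul_eq_one_left h

lemma valpow_sub {x : E} (hx : x ^ p = 1) (i j : ZMod p) :
    x ^ (i - j).val = x ^ i.val * (x ^ j.val)⁻¹ := by
  rw [sub_eq_add_neg, valpow_add hx, valpow_neg hx]

/-- normal-form word map -/
def tw (p : ℕ) (x y d : E) (t : ZMod p × ZMod p × ZMod p) : E :=
  x ^ t.1.val * y ^ t.2.1.val * d ^ t.2.2.val

/-- group law on coordinates -/
def top' (p : ℕ) (s t : ZMod p × ZMod p × ZMod p) : ZMod p × ZMod p × ZMod p :=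
  (s.1 + t.1, s.2.1 + t.2.1, s.2.2 + t.2.2 - s.2.1 * t.1)


section twlemmas
variable {x y d : E} (hx : x ^ p = 1) (hy : y ^ p = 1) (hd : d ^ p = 1)
  (hdx : Commute d x) (hdy : Commute d y) (hxy : x * y = y * x * d)

include hx hy hd hdx hdy hxy in
lemma tw_mul (s t : ZMod p × ZMod p × ZMod p) :
    tw p x y d s * tw p x y d t = tw p x y d (top' p s t) := by
  obtain ⟨i, j, k⟩ := s
  obtain ⟨m, n, l⟩ := t
  show (x ^ i.val * y ^ j.val * d ^ k.val) * (x ^ m.val * y ^ n.val * d ^ l.val)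
      = x ^ (i+m).val * y ^ (j+n).val * d ^ (k + l - j*m).val
  rw [aux_core hxy hdx hdy, valpow_add hx, valpow_add hy, valpow_sub hd, valpow_add hd,
    valpow_mul hd, Nat.mul_comm, pow_add, pow_add, pow_add]

lemma tw_zero : tw p x y d (0, 0, 0) = 1 := by
  simp [tw]

include hx hy hd hdx hdy hxy in
lemma tw_pow (i j k : ZMod p) (S : ℕ) :
    ∃ z, (tw p x y d (i, j, k)) ^ S = tw p x y d ((S : ZMod p) * i, (S : ZMod p) * j, z) := by
  induction S with
  | zero => exact ⟨0, by simpa using (tw_zero (p := p) (x := x) (y := y) (d := d)).symm⟩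
  | succ S ih =>
    obtain ⟨z, hz⟩ := ih
    refine ⟨z + k - (S : ZMod p) * j * i, ?_⟩
    rw [pow_succ, hz, tw_mul hx hy hd hdx hdy hxy]
    have h1 : ((S : ZMod p) * i + i) = ((S + 1 : ℕ) : ZMod p) * i := by push_cast; ring
    have h2 : ((S : ZMod p) * j + j) = ((S + 1 : ℕ) : ZMod p) * j := by push_cast; ring
    rw [top', ← h1, ← h2]

end twlemmas

lemma tw_a [Fact (1 < p)] (x y d : E) : tw p x y d (1, 0, 0) = x := by
  simp [tw, ZMod.val_one]

lemma tw_b [Fact (1 < p)] (x y d : E) : tw p x y d (0, 1, 0) = y := by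
  simp [tw, ZMod.val_one]

lemma tw_c (x y d : E) (u : ZMod p) : tw p x y d (0, 0, u) = d ^ u.val := by
  simp [tw]

end aux

/-- Let `p` be an odd prime and `E` the extraspecial group of order `p³` and
exponent `p`. Then `|Aut(E)| = p³(p²−1)(p−1)`, the order of `AGL(2,p)`. -/
theorem stmt_15 (p : ℕ) (hp : p.Prime) (hodd : Odd p)
    {E : Type*} [Group E] [Fintype E] (a b c : E)
    (hcard : Fintype.card E = p ^ 3)
    (hexp : ∀ g : E, g ^ p = 1)
    (hgen : Subgroup.closure {a, b} = ⊤)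
    (hc : c = a⁻¹ * b⁻¹ * a * b)
    (hcent : c ∈ Subgroup.center E)
    (hc1 : c ≠ 1) :
    Nat.card (MulAut E) = p ^ 3 * (p ^ 2 - 1) * (p - 1) := by
  classical
  haveI hfp : Fact p.Prime := ⟨hp⟩
  haveI : Fact (1 < p) := ⟨hp.one_lt⟩
  haveI : NeZero p := ⟨hp.pos.ne'⟩
  have hcg : ∀ g : E, Commute g c := fun g => Subgroup.mem_center_iff.mp hcent g
  have hCa : Commute c a := (hcg a).symm
  have hCb : Commute c b := (hcg b).symm
  have hab : a * b = b * a * c := by rw [hc]; group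
  set f : ZMod p × ZMod p × ZMod p → E := tw p a b c with hfdef
  have hf_mul : ∀ s t, f s * f t = f (top' p s t) :=
    tw_mul (hexp a) (hexp b) (hexp c) hCa hCb hab
  have hf0 : f (0, 0, 0) = 1 := tw_zero
  have hfa : f (1, 0, 0) = a := tw_a a b c
  have hfb : f (0, 1, 0) = b := tw_b a b c
  have hfc : ∀ u : ZMod p, f (0, 0, u) = c ^ u.val := fun u => tw_c a b c u
  -- surjectivity of f
  have hfsurj : Function.Surjective f := by
    intro g
    let S : Subgroup E :=
      { carrier := Set.range f
        one_mem' := ⟨(0, 0, 0), hf0⟩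
        mul_mem' := by
          rintro _ _ ⟨s, rfl⟩ ⟨t, rfl⟩
          exact ⟨top' p s t, (hf_mul s t).symm⟩
        inv_mem' := by
          rintro _ ⟨⟨i, j, k⟩, rfl⟩
          refine ⟨(-i, -j, -k - j * i), ?_⟩
          have h1 : f (i, j, k) * f (-i, -j, -k - j * i) = 1 := by
            rw [hf_mul]
            have : top' p (i, j, k) (-i, -j, -k - j * i) = (0, 0, 0) := by
              simp only [top', Prod.mk.injEq]
              refine ⟨by ring, by ring, by ring⟩
            rw [this, hf0]
          exact (inv_eq_of_mul_eq_one_right h1).symm }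
    have hsub : Subgroup.closure {a, b} ≤ S := by
      rw [Subgroup.closure_le]
      rintro z (rfl | rfl)
      · exact ⟨(1, 0, 0), hfa⟩
      · exact ⟨(0, 1, 0), hfb⟩
    have : g ∈ S := by
      rw [hgen] at hsub
      exact hsub (Subgroup.mem_top g)
    exact this
  have hcardT : Fintype.card (ZMod p × ZMod p × ZMod p) = p ^ 3 := by
    simp [ZMod.card]; ring
  have hfbij : Function.Bijective f :=
    (Fintype.bijective_iff_surjective_and_card f).mpr ⟨hfsurj, by rw [hcardT, hcard]⟩
  have hfinj : Function.Injective f := hfbij.injective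
  set F : (ZMod p × ZMod p × ZMod p) ≃ E := Equiv.ofBijective f hfbij with hFdef
  have hFs : ∀ s, F.symm (f s) = s := fun s => Equiv.ofBijective_symm_apply_apply f hfbij s
  -- commuting criterion
  have hcomm_iff : ∀ i j k m n l : ZMod p,
      (f (i, j, k) * f (m, n, l) = f (m, n, l) * f (i, j, k)) ↔ j * m = n * i := by
    intro i j k m n l
    rw [hf_mul, hf_mul]
    constructor
    · intro h
      have h3 := congrArg (fun t : ZMod p × ZMod p × ZMod p => t.2.2) (hfinj h)
      simp only [top'] at h3
      linear_combination -h3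
    · intro h
      congr 1
      simp only [top', Prod.mk.injEq]
      refine ⟨by ring, by ring, by linear_combination -h⟩
  -- key construction: every noncommuting pair is the image of (a,b) under an automorphism
  have key : ∀ x y : E, x * y ≠ y * x → ∃ θ : MulAut E, θ a = x ∧ θ b = y := by
    intro x y hxyne
    obtain ⟨⟨i, j, k⟩, rfl⟩ := hfsurj x
    obtain ⟨⟨m, n, l⟩, rfl⟩ := hfsurj y
    set δ : ZMod p := n * i - j * m with hδdef
    have hδ : δ ≠ 0 := by
      intro h0
      exact hxyne ((hcomm_iff i j k m n l).mpr (by linear_combination -h0))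
    set d : E := c ^ δ.val with hddef
    have hdf : d = f (0, 0, δ) := (hfc δ).symm
    set x0 : E := f (i, j, k) with hx0
    set y0 : E := f (m, n, l) with hy0
    have hxyd : x0 * y0 = y0 * x0 * d := by
      rw [hx0, hy0, hdf, hf_mul, hf_mul, hf_mul]
      congr 1
      simp only [top', Prod.mk.injEq]
      refine ⟨by ring, by ring, by ring⟩
    have hdC : ∀ g : E, Commute d g := fun g => ((hcg g).symm.pow_left δ.val)
    have hw_mul : ∀ s t, tw p x0 y0 d s * tw p x0 y0 d t = tw p x0 y0 d (top' p s t) :=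
      tw_mul (hexp _) (hexp _) (hexp _) (hdC _) (hdC _) hxyd
    set ψ : E → E := fun g => tw p x0 y0 d (F.symm g) with hψdef
    have hψf : ∀ s, ψ (f s) = tw p x0 y0 d s := fun s => by rw [hψdef]; simp only; rw [hFs]
    have hψmul : ∀ g h : E, ψ (g * h) = ψ g * ψ h := by
      intro g h
      obtain ⟨s, rfl⟩ := hfsurj g
      obtain ⟨t, rfl⟩ := hfsurj h
      rw [hf_mul, hψf, hψf, hψf, hw_mul]
    set ψm : E →* E := MonoidHom.mk' ψ hψmul with hψm
    have hψa : ψ a = x0 := by rw [← hfa, hψf, tw_a]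
    have hψb : ψ b = y0 := by rw [← hfb, hψf, tw_b]
    have hψinj : Function.Injective ψm := by
      rw [injective_iff_map_eq_one]
      intro g hg
      obtain ⟨⟨s, t, u⟩, rfl⟩ := hfsurj g
      have hg' : tw p x0 y0 d (s, t, u) = 1 := by rw [← hψf (s, t, u)]; exact hg
      have hgA := hg'
      -- expand x0^s.val and y0^t.val in coordinates
      obtain ⟨z1, hz1⟩ := tw_pow (hexp a) (hexp b) (hexp c) hCa hCb hab i j k s.val
      obtain ⟨z2, hz2⟩ := tw_pow (hexp a) (hexp b) (hexp c) hCa hCb hab m n l t.val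
      rw [ZMod.natCast_rightInverse s] at hz1
      rw [ZMod.natCast_rightInverse t] at hz2
      rw [← hfdef] at hz1 hz2
      rw [← hx0] at hz1
      rw [← hy0] at hz2
      have hdu : ∀ v : ZMod p, d ^ v.val = f (0, 0, δ * v) := by
        intro v
        rw [hddef, ← pow_mul, aux_pow_mod c (hexp c) (δ.val * v.val), ← ZMod.val_mul, hfc]
      have hexpand : tw p x0 y0 d (s, t, u)
          = f (top' p (top' p (s * i, s * j, z1) (t * m, t * n, z2)) (0, 0, δ * u)) := by
        show x0 ^ s.val * y0 ^ t.val * d ^ u.val = _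
        rw [hz1, hz2, hdu u, hf_mul, hf_mul]
      rw [hexpand, ← hf0] at hgA
      have h3 := hfinj hgA
      simp only [top', Prod.mk.injEq] at h3
      obtain ⟨h31, h32, h33⟩ := h3
      have hs0 : s = 0 := by
        have : s * δ = 0 := by rw [hδdef]; linear_combination n * h31 - m * h32
        rcases mul_eq_zero.mp this with h | h
        · exact h
        · exact absurd h hδ
      have ht0 : t = 0 := by
        have : t * δ = 0 := by rw [hδdef]; linear_combination i * h32 - j * h31
        rcases mul_eq_zero.mp this with h | h
        · exact h
        · exact absurd h hδ
      have hu0 : u = 0 := by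
        have h4 : tw p x0 y0 d (s, t, u) = f (0, 0, δ * u) := by
          show x0 ^ s.val * y0 ^ t.val * d ^ u.val = _
          rw [hs0, ht0, ZMod.val_zero, pow_zero, pow_zero, one_mul, one_mul, hdu u]
        rw [h4, ← hf0] at hg'
        have h5 := hfinj hg'
        simp only [Prod.mk.injEq] at h5
        rcases mul_eq_zero.mp h5.2.2 with h | h
        · exact absurd h hδ
        · exact h
      rw [hs0, ht0, hu0, hf0]
    have hψbij : Function.Bijective ψm := Finite.injective_iff_bijective.mp hψinj
    exact ⟨MulEquiv.ofBijective ψm hψbij, hψa, hψb⟩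
  -- the evaluation-at-(a,b) equivalence
  have habne : a * b ≠ b * a := by
    rw [hab]
    intro h
    exact hc1 (mul_left_cancel (h.trans (mul_one (b * a)).symm))
  let Φ : MulAut E → {q : E × E // q.1 * q.2 ≠ q.2 * q.1} := fun φ =>
    ⟨(φ a, φ b), by
      simp only
      rw [← map_mul, ← map_mul]
      intro h
      exact habne (φ.injective h)⟩
  have hΦinj : Function.Injective Φ := by
    intro φ1 φ2 h
    have ha' : φ1 a = φ2 a := congrArg (fun q => q.val.1) h
    have hb' : φ1 b = φ2 b := congrArg (fun q => q.val.2) h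
    apply MulEquiv.ext
    intro g
    have hg : g ∈ Subgroup.closure ({a, b} : Set E) := by
      rw [hgen]; exact Subgroup.mem_top g
    refine Subgroup.closure_induction ?_ ?_ ?_ ?_ hg
    · rintro z (rfl | rfl)
      exacts [ha', hb']
    · rw [map_one, map_one]
    · intro u v _ _ h1 h2
      rw [map_mul, map_mul, h1, h2]
    · intro u _ h1
      rw [map_inv, map_inv, h1]
  have hΦsurj : Function.Surjective Φ := by
    rintro ⟨⟨x, y⟩, hne⟩
    obtain ⟨θ, h1, h2⟩ := key x y hne
    refine ⟨θ, Subtype.ext ?_⟩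
    show (θ a, θ b) = (x, y)
    rw [h1, h2]
  have hstep1 : Nat.card (MulAut E) = Nat.card {q : E × E // q.1 * q.2 ≠ q.2 * q.1} :=
    Nat.card_congr (Equiv.ofBijective Φ ⟨hΦinj, hΦsurj⟩)
  -- transfer to coordinates
  have hPiff : ∀ t : (ZMod p × ZMod p × ZMod p) × (ZMod p × ZMod p × ZMod p),
      (t.1.2.1 * t.2.1 ≠ t.2.2.1 * t.1.1) ↔
        ((F.prodCongr F) t).1 * ((F.prodCongr F) t).2 ≠ ((F.prodCongr F) t).2 * ((F.prodCongr F) t).1 := by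
    rintro ⟨⟨i, j, k⟩, ⟨m, n, l⟩⟩
    exact not_congr (hcomm_iff i j k m n l).symm
  have e1 : {t : (ZMod p × ZMod p × ZMod p) × (ZMod p × ZMod p × ZMod p) //
        t.1.2.1 * t.2.1 ≠ t.2.2.1 * t.1.1} ≃ {q : E × E // q.1 * q.2 ≠ q.2 * q.1} :=
    (F.prodCongr F).subtypeEquiv hPiff
  have e2 : {t : (ZMod p × ZMod p × ZMod p) × (ZMod p × ZMod p × ZMod p) //
        t.1.2.1 * t.2.1 ≠ t.2.2.1 * t.1.1}
      ≃ {v : (ZMod p × ZMod p) × (ZMod p × ZMod p) // v.1.2 * v.2.1 ≠ v.2.2 * v.1.1}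
          × (ZMod p × ZMod p) :=
    { toFun := fun t =>
        (⟨((t.val.1.1, t.val.1.2.1), (t.val.2.1, t.val.2.2.1)), t.prop⟩,
          (t.val.1.2.2, t.val.2.2.2))
      invFun := fun v =>
        ⟨((v.1.val.1.1, v.1.val.1.2, v.2.1), (v.1.val.2.1, v.1.val.2.2, v.2.2)), v.1.prop⟩
      left_inv := fun t => rfl
      right_inv := fun v => rfl }
  -- count the invertible-matrix part
  have hker : ∀ w : ZMod p × ZMod p, w ≠ 0 →
      Fintype.card {u : ZMod p × ZMod p // w.2 * u.1 = u.2 * w.1} = p := by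
    rintro ⟨i, j⟩ hw
    by_cases hj : j = 0
    · have hi : i ≠ 0 := by
        rintro rfl
        exact hw (by rw [hj]; rfl)
      have e : {u : ZMod p × ZMod p // j * u.1 = u.2 * i} ≃ ZMod p :=
        { toFun := fun u => u.val.1
          invFun := fun m => ⟨(m, 0), by rw [hj]; ring⟩
          left_inv := fun u => by
            obtain ⟨⟨m, n⟩, hu⟩ := u
            have hn : n = 0 := by
              have h0 : n * i = 0 := by rw [← hu, hj]; ring
              rcases mul_eq_zero.mp h0 with h | h
              exacts [h, absurd h hi]
            simp [hn]
          right_inv := fun m => rfl }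
      rw [Fintype.card_congr e, ZMod.card]
    · have e : {u : ZMod p × ZMod p // j * u.1 = u.2 * i} ≃ ZMod p :=
        { toFun := fun u => u.val.2
          invFun := fun n => ⟨(j⁻¹ * (n * i), n), by rw [← mul_assoc, mul_inv_cancel₀ hj, one_mul]⟩
          left_inv := fun u => by
            obtain ⟨⟨m, n⟩, hu⟩ := u
            have hm : j⁻¹ * (n * i) = m := by rw [← hu, ← mul_assoc, inv_mul_cancel₀ hj, one_mul]
            simp [hm]
          right_inv := fun n => rfl }
      rw [Fintype.card_congr e, ZMod.card]
  have hF2card : Fintype.card (ZMod p × ZMod p) = p ^ 2 := by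
    rw [Fintype.card_prod, ZMod.card, pow_two]
  have hcompl : ∀ w : ZMod p × ZMod p,
      Fintype.card {u : ZMod p × ZMod p // w.2 * u.1 ≠ u.2 * w.1}
        = if w = 0 then 0 else p ^ 2 - p := by
    intro w
    by_cases hw : w = 0
    · subst hw
      rw [if_pos rfl]
      refine Fintype.card_eq_zero_iff.mpr ⟨fun u => u.prop ?_⟩
      show (0 : ZMod p) * u.val.1 = u.val.2 * 0
      ring
    · rw [if_neg hw,
        Fintype.card_subtype_compl (fun u : ZMod p × ZMod p => w.2 * u.1 = u.2 * w.1), hF2card,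
        hker w hw]
  have hGL : Fintype.card
      {v : (ZMod p × ZMod p) × (ZMod p × ZMod p) // v.1.2 * v.2.1 ≠ v.2.2 * v.1.1}
      = (p ^ 2 - 1) * (p ^ 2 - p) := by
    rw [Fintype.card_congr
      (Equiv.subtypeProdEquivSigmaSubtype (fun w u : ZMod p × ZMod p => w.2 * u.1 ≠ u.2 * w.1)),
      Fintype.card_sigma]
    rw [Finset.sum_congr rfl (fun w _ => hcompl w)]
    rw [Finset.sum_ite, Finset.sum_const, Finset.sum_const, smul_eq_mul, smul_eq_mul, mul_zero,
      zero_add]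
    have hfilt : (Finset.univ.filter (fun w : ZMod p × ZMod p => w = 0)) = {0} := by
      rw [Finset.filter_eq' Finset.univ 0, if_pos (Finset.mem_univ 0)]
    have : (Finset.univ.filter (fun w : ZMod p × ZMod p => ¬ w = 0)).card = p ^ 2 - 1 := by
      rw [Finset.filter_not, Finset.card_sdiff_of_subset (Finset.filter_subset _ _), hfilt]
      simp [hF2card]
    rw [this]
  -- assemble
  have hstep2 : Nat.card {q : E × E // q.1 * q.2 ≠ q.2 * q.1}
      = ((p ^ 2 - 1) * (p ^ 2 - p)) * p ^ 2 := by
    rw [Nat.card_congr (e1.symm.trans e2), Nat.card_eq_fintype_card, Fintype.card_prod, hGL,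
      hF2card]
  rw [hstep1, hstep2]
  have h1 : p ^ 2 - p = p * (p - 1) := by
    obtain ⟨q, rfl⟩ : ∃ q, p = q + 1 := ⟨p - 1, by have := hp.two_le; omega⟩
    have h2 : (q + 1) ^ 2 = q * q + 2 * q + 1 := by ring
    have h3 : (q + 1) * ((q + 1) - 1) = q * q + q := by simp [Nat.add_sub_cancel]; ring
    rw [h2, h3]
    generalize q * q = r
    omega
  rw [h1]
  ring
end

section
/- Let p be a prime, n a positive integer, and Γ = Cay(G, S) a Cayley graph on G = (ℤ/p)^n. Suppose K₁ and K₂ are subgroups of G such that the induced subgraphs on K₁ and on K₂ are complete, and every vertex of K₁ is adjacent in Γ to every vertex of K₂ \ K₁. Then the induced subgraph on the subgroup K₁K₂ is complete; equivalently, (K₁K₂)* ⊆ S, i.e. every nonidentity element of K₁K₂ lies in S. -/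
/-- Let `p` be a prime, `n` a positive integer and `Cay(G,S)` a Cayley graph on
`G = (ℤ/p)ⁿ` (written additively: `g` adjacent `h` iff `g − h ∈ S`, with
`0 ∉ S` and `S` inverse-closed). If `K₁, K₂` are subgroups of `G` whose induced
subgraphs are complete and every vertex of `K₁` is adjacent to every (other)
vertex of `K₂`, then the induced subgraph on `K₁K₂` is complete. -/
theorem stmt_16 (p n : ℕ) (hp : p.Prime) (hn : 0 < n)
    (S : Set (Fin n → ZMod p)) (hS0 : (0 : Fin n → ZMod p) ∉ S)
    (hSinv : ∀ s ∈ S, -s ∈ S)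
    (K₁ K₂ : AddSubgroup (Fin n → ZMod p))
    (hK₁ : ∀ x ∈ K₁, x ≠ 0 → x ∈ S)
    (hK₂ : ∀ x ∈ K₂, x ≠ 0 → x ∈ S)
    (hadj : ∀ x ∈ K₁, ∀ y ∈ K₂, x ≠ y → x - y ∈ S) :
    ∀ u ∈ K₁ ⊔ K₂, ∀ v ∈ K₁ ⊔ K₂, u ≠ v → u - v ∈ S := by
  intro u hu v hv huv
  obtain ⟨x₁, hx₁, y₁, hy₁, rfl⟩ := AddSubgroup.mem_sup.mp hu
  obtain ⟨x₂, hx₂, y₂, hy₂, rfl⟩ := AddSubgroup.mem_sup.mp hv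
  have key : x₁ + y₁ - (x₂ + y₂) = (x₁ - x₂) - (y₂ - y₁) := by ring
  rw [key]
  apply hadj _ (sub_mem hx₁ hx₂) _ (sub_mem hy₂ hy₁)
  intro h
  apply huv
  have : x₁ - x₂ - (y₂ - y₁) = 0 := by rw [h]; ring
  linear_combination key + this
end
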